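/- Let f_1,…,f_N : ℝ^d → ℝ be L-smooth and set f = (1/N)·Σ_{i=1}^N f_i. Fix x_1,…,x_N, x̃_1,…,x̃_N ∈ ℝ^d, a real ũ > 0, and for each i reals u_i, ũ_i with 0 < u_i ≤ ũ_i ≤ ũ. For l = (l_1,…,l_N) ∈ {1,…,d}^N and each i, set g_i(l_i) = G_{f_i}^{(c)}(x_i, u_i, l_i) − G_{f_i}^{(c)}(x̃_i, ũ_i, l_i) + G_{f_i}^{(2d)}(x̃_i, ũ_i), and let x̄ = (1/N)·Σ_{i=1}^N x_i. Then d^{−N}·Σ_{l ∈ {1,…,d}^N} ‖(1/N)·Σ_{i=1}^N g_i(l_i)‖² ≤ 2·‖∇f(x̄)‖² + (4L²(1+12d)/N)·Σ_{i=1}^N ‖x_i − x̄‖² + (48·d·L²/N)·Σ_{i=1}^N ‖x̃_i − x̄‖² + 14·ũ²·L²·d². -/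

import Mathlib

/-!
Write `g_i(l) = c_i(l) + G^{(2d)}(x_i, u_i)`, where
`c_i(l) = G^{(c)}(x_i, u_i, l) - G^{(c)}(x̃_i, ũ_i, l) - (G^{(2d)}(x_i, u_i) - G^{(2d)}(x̃_i, ũ_i))`
has mean zero over `l`, because the `d` coordinate estimators average to the `2d`-point one.
The `l_i` are independent and uniform, so the cross terms vanish and the second moment of
`(1/N) Σ g_i(l_i)` is `‖(1/N) Σ G^{(2d)}(x_i, u_i)‖²` plus `1/N²` times the sum of the variances of
the `c_i`. Each variance is at most the second moment
`d ‖G^{(2d)}(x_i, u_i) - G^{(2d)}(x̃_i, ũ_i)‖²`.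
Every coordinate of `G^{(2d)}(x, u)` is a central difference quotient within `L u` of the partial
derivative (mean value inequality and `L`-smoothness), so `‖G^{(2d)}(x, u) - ∇h(x)‖² ≤ d L² u²`.
The remaining terms are compared with the gradients at `x̄` using `‖a + b‖² ≤ 2 ‖a‖² + 2 ‖b‖²`.
-/

noncomputable section

open Finset

/-- The coordinate-wise zeroth-order gradient estimator
`G_h^{(c)}(x,u,l) = d ((h(x+u e_l) − h(x−u e_l))/(2u)) e_l`. -/
def Gc (d : ℕ) (h : EuclideanSpace ℝ (Fin d) → ℝ) (x : EuclideanSpace ℝ (Fin d)) (u : ℝ)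
    (l : Fin d) : EuclideanSpace ℝ (Fin d) :=
  ((d : ℝ) * ((h (x + u • EuclideanSpace.single l (1 : ℝ))
      - h (x - u • EuclideanSpace.single l (1 : ℝ))) / (2 * u))) • EuclideanSpace.single l (1 : ℝ)

/-- The `2d`-point zeroth-order gradient estimator. -/
def G2d (d : ℕ) (h : EuclideanSpace ℝ (Fin d) → ℝ) (x : EuclideanSpace ℝ (Fin d)) (u : ℝ) :
    EuclideanSpace ℝ (Fin d) :=
  ∑ l : Fin d, ((h (x + u • EuclideanSpace.single l (1 : ℝ))
      - h (x - u • EuclideanSpace.single l (1 : ℝ))) / (2 * u)) • EuclideanSpace.single l (1 : ℝ)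

def mean {κ E : Type*} [Fintype κ] [AddCommGroup E] [Module ℝ E] (v : κ → E) : E :=
  (Fintype.card κ : ℝ)⁻¹ • ∑ j, v j

lemma norm_add_sq_le {E : Type*} [SeminormedAddCommGroup E] (a b : E) :
    ‖a + b‖ ^ 2 ≤ 2 * (‖a‖ ^ 2 + ‖b‖ ^ 2) :=
  (pow_le_pow_left₀ (norm_nonneg _) (norm_add_le a b) 2).trans add_sq_le

section Mean

variable {κ E : Type*} [Fintype κ] [Nonempty κ] [NormedAddCommGroup E] [InnerProductSpace ℝ E]

lemma mean_const (c : E) : mean (fun _ : κ => c) = c := by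
  rw [mean, sum_const, card_univ, ← Nat.cast_smul_eq_nsmul ℝ, inv_smul_smul₀ (by positivity)]

omit [Nonempty κ] in
lemma mean_add (v w : κ → E) : mean (fun j => v j + w j) = mean v + mean w := by
  rw [mean, mean, mean, sum_add_distrib, smul_add]

lemma sum_sub_mean (v : κ → E) : ∑ j, (v j - mean v) = 0 := by
  rw [sum_sub_distrib, sum_const, card_univ, ← Nat.cast_smul_eq_nsmul ℝ, mean,
    smul_inv_smul₀ (by positivity), sub_self]

lemma mean_norm_add_sq (a : E) (v : κ → E) :
    mean (fun j => ‖a + v j‖ ^ 2) = ‖a + mean v‖ ^ 2 + mean (fun j => ‖v j - mean v‖ ^ 2) := by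
  have split : ∀ j, ‖a + v j‖ ^ 2 = ‖a + mean v‖ ^ 2
      + 2 * inner ℝ (a + mean v) (v j - mean v) + ‖v j - mean v‖ ^ 2 := fun j => by
    rw [← norm_add_sq_real, add_add_sub_cancel]
  have cross : mean (fun j => 2 * inner ℝ (a + mean v) (v j - mean v)) = 0 := by
    rw [mean, ← mul_sum, ← inner_sum, sum_sub_mean, inner_zero_right, mul_zero, smul_zero]
  simp only [split, mean_add, mean_const, cross, add_zero]

lemma mean_norm_sub_mean_sq_le (v : κ → E) (b : E) :
    mean (fun j => ‖v j - mean v‖ ^ 2) ≤ mean (fun j => ‖v j - b‖ ^ 2) := by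
  have h := mean_norm_add_sq (-b) v
  simp only [neg_add_eq_sub] at h
  rw [h]
  exact le_add_of_nonneg_left (sq_nonneg _)

lemma norm_mean_sq_le (v : κ → E) : ‖mean v‖ ^ 2 ≤ mean (fun j => ‖v j‖ ^ 2) := by
  have h := mean_norm_add_sq 0 v
  simp only [zero_add] at h
  rw [h]
  exact le_add_of_nonneg_right (smul_nonneg (by positivity) (sum_nonneg fun j _ => sq_nonneg _))

lemma norm_mean_sq_le_two_mul (v w : κ → E) :
    ‖mean v‖ ^ 2 ≤ 2 * (‖mean w‖ ^ 2 + mean (fun j => ‖v j - w j‖ ^ 2)) := by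
  have hsplit : mean v = mean w + mean (fun j => v j - w j) := by
    rw [← mean_add]; simp only [add_sub_cancel]
  rw [hsplit]
  exact (norm_add_sq_le _ _).trans (by gcongr; exact norm_mean_sq_le _)

omit [Nonempty κ] in
lemma mean_pi_succ {n : ℕ} (F : (Fin (n + 1) → κ) → ℝ) :
    mean F = mean (fun j => mean (fun l : Fin n → κ => F (Fin.cons j l))) := by
  simp only [mean, smul_eq_mul, ← mul_sum, ← mul_assoc, Fintype.card_fun, Fintype.card_fin,
    pow_succ']
  rw [← (Fin.consEquiv fun _ => κ).sum_comp, Fintype.sum_prod_type]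
  simp [mul_comm, Fin.consEquiv]

lemma mean_norm_add_sum_sq (n : ℕ) (g : E) (v : Fin n → κ → E) :
    mean (fun l : Fin n → κ => ‖g + ∑ i, v i (l i)‖ ^ 2)
      = ‖g + ∑ i, mean (v i)‖ ^ 2 + ∑ i, mean (fun j => ‖v i j - mean (v i)‖ ^ 2) := by
  induction n generalizing g with
  | zero => simp [mean_const]
  | succ n ih =>
    -- average over `l 0` last; the inner average is the induction hypothesis at `g + v 0 (l 0)`
    rw [mean_pi_succ]
    simp only [Fin.sum_univ_succ, Fin.cons_zero, Fin.cons_succ, ← add_assoc]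
    simp only [ih, mean_add, mean_const]
    simp_rw [add_right_comm g (v 0 _), mean_norm_add_sq, add_right_comm g _ (mean (v 0))]

lemma mean_norm_sum_sq_le (n : ℕ) (v : Fin n → κ → E) (b : Fin n → E) :
    mean (fun l : Fin n → κ => ‖∑ i, v i (l i)‖ ^ 2)
      ≤ ‖∑ i, mean (v i)‖ ^ 2 + ∑ i, mean (fun j => ‖v i j - b i‖ ^ 2) := by
  simpa only [zero_add] using (mean_norm_add_sum_sq n 0 v).trans_le
    (add_le_add le_rfl (sum_le_sum fun i _ => mean_norm_sub_mean_sq_le (v i) (b i)))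

end Mean

section Smooth

variable {F : Type*} [NormedAddCommGroup F] [InnerProductSpace ℝ F] [CompleteSpace F]
  {h : F → ℝ} {L : ℝ}

lemma norm_gradient_sub_gradient_sq_le
    (hsmooth : ∀ a b, ‖gradient h a - gradient h b‖ ≤ L * ‖a - b‖) (a b : F) :
    ‖gradient h a - gradient h b‖ ^ 2 ≤ L ^ 2 * ‖a - b‖ ^ 2 := by
  rw [← mul_pow]
  exact pow_le_pow_left₀ (norm_nonneg _) (hsmooth a b) 2

lemma gradient_const_mul_sum {ι : Type*} [Fintype ι] {f : ι → F → ℝ} {z : F}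
    (hf : ∀ i, DifferentiableAt ℝ (f i) z) (c : ℝ) :
    gradient (fun y => c * ∑ i, f i y) z = c • ∑ i, gradient (f i) z := by
  refine HasGradientAt.gradient ?_
  rw [hasGradientAt_iff_hasFDerivAt, map_smul, map_sum]
  simp only [toDual_gradient]
  exact (HasFDerivAt.fun_sum fun i _ => (hf i).hasFDerivAt).const_mul c

lemma norm_fderiv_sub_fderiv (a b : F) :
    ‖fderiv ℝ h a - fderiv ℝ h b‖ = ‖gradient h a - gradient h b‖ := by
  rw [← toDual_gradient, ← toDual_gradient, ← map_sub, LinearIsometryEquiv.norm_map]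

lemma abs_centralDiff_sub_inner_gradient_le (hdiff : Differentiable ℝ h)
    (hsmooth : ∀ a b, ‖gradient h a - gradient h b‖ ≤ L * ‖a - b‖) (x : F) {e : F}
    (he : ‖e‖ = 1) {u : ℝ} (hu : 0 < u) :
    |(h (x + u • e) - h (x - u • e)) / (2 * u) - inner ℝ (gradient h x) e| ≤ L * u := by
  have hL : 0 ≤ L := by simpa [he] using (norm_nonneg _).trans (hsmooth e 0)
  have hball : ∀ s ∈ ({-u, u} : Set ℝ), x + s • e ∈ Metric.closedBall x u := fun s hs' => by
    rcases hs' with rfl | rfl <;> simp [norm_smul, he, abs_of_pos hu]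
  -- `‖Dh z - Dh x‖ ≤ L u` on `closedBall x u`, which contains `x ± u e`
  have hmvt := (convex_closedBall x u).norm_image_sub_le_of_norm_hasFDerivWithin_le'
    (fun z _ => (hdiff z).hasFDerivAt.hasFDerivWithinAt) (φ := fderiv ℝ h x) (C := L * u)
    (fun z hz => by
      rw [norm_fderiv_sub_fderiv]
      exact (hsmooth z x).trans (mul_le_mul_of_nonneg_left (mem_closedBall_iff_norm.1 hz) hL))
    (hball (-u) (by simp)) (hball u (by simp))
  have hqp : x + u • e - (x + -u • e) = (2 * u) • e := by module
  have h2u : 0 < 2 * u := by positivity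
  rw [hqp, norm_smul, he, mul_one, Real.norm_of_nonneg h2u.le, map_smul, smul_eq_mul,
    ← inner_gradient_left, Real.norm_eq_abs, neg_smul, ← sub_eq_add_neg] at hmvt
  rw [div_sub' h2u.ne', abs_div, abs_of_pos h2u, div_le_iff₀ h2u]
  simpa only [mul_comm (2 * u)] using hmvt

end Smooth

section Estimators

variable {d : ℕ} (h : EuclideanSpace ℝ (Fin d) → ℝ)

lemma G2d_apply (x : EuclideanSpace ℝ (Fin d)) (u : ℝ) (j : Fin d) :
    G2d d h x u j = (h (x + u • EuclideanSpace.single j 1)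
      - h (x - u • EuclideanSpace.single j 1)) / (2 * u) := by
  simp [G2d, Pi.single_apply]

lemma Gc_eq_smul_single (x : EuclideanSpace ℝ (Fin d)) (u : ℝ) (l : Fin d) :
    Gc d h x u l = ((d : ℝ) * G2d d h x u l) • EuclideanSpace.single l 1 := by
  rw [G2d_apply]; rfl

lemma sum_Gc (x : EuclideanSpace ℝ (Fin d)) (u : ℝ) :
    ∑ l, Gc d h x u l = (d : ℝ) • G2d d h x u := by
  simp only [Gc, mul_smul, ← smul_sum]; rfl

lemma mean_Gc_sub_Gc_add_G2d [NeZero d] (x y : EuclideanSpace ℝ (Fin d)) (u v : ℝ) :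
    mean (fun l => Gc d h x u l - Gc d h y v l + G2d d h y v) = G2d d h x u := by
  rw [mean_add, mean_const, mean, sum_sub_distrib, sum_Gc, sum_Gc, ← smul_sub, Fintype.card_fin,
    inv_smul_smul₀ (NeZero.ne _), sub_add_cancel]

lemma mean_norm_Gc_sub_Gc_sq (x y : EuclideanSpace ℝ (Fin d)) (u v : ℝ) :
    mean (fun l => ‖Gc d h x u l - Gc d h y v l‖ ^ 2) = d * ‖G2d d h x u - G2d d h y v‖ ^ 2 := by
  simp only [Gc_eq_smul_single, ← sub_smul, norm_smul, PiLp.norm_single, norm_one, mul_one,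
    ← mul_sub, mean, Fintype.card_fin, EuclideanSpace.norm_sq_eq, PiLp.sub_apply, norm_mul,
    mul_pow, ← mul_sum, smul_eq_mul, Real.norm_natCast]
  rcases eq_or_ne d 0 with rfl | hd
  · simp
  · field_simp

lemma inv_pow_mul_sum_norm_inv_smul_sum_Gc_sq_le [NeZero d] {N : ℕ} [NeZero N]
    (h : Fin N → EuclideanSpace ℝ (Fin d) → ℝ) (x y w : Fin N → EuclideanSpace ℝ (Fin d))
    (u v : Fin N → ℝ) :
    ((d : ℝ) ^ N)⁻¹ * ∑ l : Fin N → Fin d,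
        ‖(N : ℝ)⁻¹ • ∑ i, (Gc d (h i) (x i) (u i) (l i) - Gc d (h i) (y i) (v i) (l i)
          + G2d d (h i) (y i) (v i))‖ ^ 2
      ≤ 2 * ‖(N : ℝ)⁻¹ • ∑ i, w i‖ ^ 2 + (N : ℝ)⁻¹ * ∑ i, (2 * ‖G2d d (h i) (x i) (u i) - w i‖ ^ 2
        + d * ‖G2d d (h i) (x i) (u i) - G2d d (h i) (y i) (v i)‖ ^ 2) := by
  have hvar := mean_norm_sum_sq_le N
    (fun i l => Gc d (h i) (x i) (u i) l - Gc d (h i) (y i) (v i) l + G2d d (h i) (y i) (v i))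
    (fun i => G2d d (h i) (y i) (v i))
  simp only [add_sub_cancel_right, mean_Gc_sub_Gc_add_G2d, mean_norm_Gc_sub_Gc_sq] at hvar
  simp only [mean, Fintype.card_fun, Fintype.card_fin, Nat.cast_pow, smul_eq_mul, ← mul_sum]
    at hvar
  have hbias := norm_mean_sq_le_two_mul (fun i => G2d d (h i) (x i) (u i)) w
  simp only [mean, Fintype.card_fin, smul_eq_mul] at hbias
  have hN2 : ((N : ℝ)⁻¹) ^ 2 ≤ (N : ℝ)⁻¹ := pow_le_of_le_one (by positivity)
    (inv_le_one_of_one_le₀ (by exact_mod_cast NeZero.one_le)) two_ne_zero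
  simp only [norm_smul, mul_pow, Real.norm_eq_abs, sq_abs, ← mul_sum] at hbias ⊢
  rw [sum_add_distrib, ← mul_sum, ← mul_sum]
  have hΔ : 0 ≤ d * ∑ i, ‖G2d d (h i) (x i) (u i) - G2d d (h i) (y i) (v i)‖ ^ 2 := by positivity
  nlinarith [mul_le_mul_of_nonneg_left hvar (sq_nonneg (N : ℝ)⁻¹),
    mul_le_mul_of_nonneg_right hN2 hΔ]

variable {h} {L : ℝ}

lemma norm_G2d_sub_gradient_sq_le (hdiff : Differentiable ℝ h)
    (hsmooth : ∀ a b, ‖gradient h a - gradient h b‖ ≤ L * ‖a - b‖)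
    (x : EuclideanSpace ℝ (Fin d)) {u : ℝ} (hu : 0 < u) :
    ‖G2d d h x u - gradient h x‖ ^ 2 ≤ d * L ^ 2 * u ^ 2 := by
  rw [EuclideanSpace.norm_sq_eq]
  calc ∑ j, ‖(G2d d h x u - gradient h x) j‖ ^ 2 ≤ ∑ _j : Fin d, (L * u) ^ 2 := by
        refine sum_le_sum fun j _ => ?_
        have hj := abs_centralDiff_sub_inner_gradient_le hdiff hsmooth x
          (e := EuclideanSpace.single j 1) (by simp) hu
        rw [EuclideanSpace.inner_single_right, one_mul, conj_trivial] at hj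
        rw [PiLp.sub_apply, G2d_apply, Real.norm_eq_abs]
        exact pow_le_pow_left₀ (abs_nonneg _) hj 2
    _ = d * L ^ 2 * u ^ 2 := by simp; ring

lemma norm_G2d_sub_gradient_at_sq_le (hdiff : Differentiable ℝ h)
    (hsmooth : ∀ a b, ‖gradient h a - gradient h b‖ ≤ L * ‖a - b‖)
    (x z : EuclideanSpace ℝ (Fin d))
    {u : ℝ} (hu : 0 < u) :
    ‖G2d d h x u - gradient h z‖ ^ 2 ≤ 2 * (d * L ^ 2 * u ^ 2 + L ^ 2 * ‖x - z‖ ^ 2) := by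
  rw [← sub_add_sub_cancel _ (gradient h x)]
  exact (norm_add_sq_le _ _).trans
    (by gcongr; exacts [norm_G2d_sub_gradient_sq_le hdiff hsmooth x hu,
      norm_gradient_sub_gradient_sq_le hsmooth x z])

lemma norm_G2d_sub_G2d_sq_le (hdiff : Differentiable ℝ h)
    (hsmooth : ∀ a b, ‖gradient h a - gradient h b‖ ≤ L * ‖a - b‖)
    (x y z : EuclideanSpace ℝ (Fin d))
    {u v : ℝ} (hu : 0 < u) (hv : 0 < v) :
    ‖G2d d h x u - G2d d h y v‖ ^ 2 ≤ 4 * (d * L ^ 2 * u ^ 2 + L ^ 2 * ‖x - z‖ ^ 2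
      + (d * L ^ 2 * v ^ 2 + L ^ 2 * ‖y - z‖ ^ 2)) := by
  rw [← sub_sub_sub_cancel_right _ _ (gradient h z), sub_eq_add_neg]
  refine (norm_add_sq_le _ _).trans ?_
  rw [norm_neg]
  linarith [norm_G2d_sub_gradient_at_sq_le hdiff hsmooth x z hu,
    norm_G2d_sub_gradient_at_sq_le hdiff hsmooth y z hv]

lemma two_mul_norm_G2d_sub_gradient_sq_add_le (hdiff : Differentiable ℝ h)
    (hsmooth : ∀ a b, ‖gradient h a - gradient h b‖ ≤ L * ‖a - b‖)
    (x y z : EuclideanSpace ℝ (Fin d))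
    {u v r : ℝ} (hu : 0 < u) (hv : 0 < v) (hur : u ≤ r) (hvr : v ≤ r) :
    2 * ‖G2d d h x u - gradient h z‖ ^ 2 + d * ‖G2d d h x u - G2d d h y v‖ ^ 2
      ≤ 4 * L ^ 2 * (1 + 12 * d) * ‖x - z‖ ^ 2 + 48 * d * L ^ 2 * ‖y - z‖ ^ 2
        + 14 * r ^ 2 * L ^ 2 * d ^ 2 := by
  have hbias := norm_G2d_sub_gradient_at_sq_le hdiff hsmooth x z hu
  have hgap := mul_le_mul_of_nonneg_left (norm_G2d_sub_G2d_sq_le hdiff hsmooth x y z hu hv)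
    (Nat.cast_nonneg d)
  have hdd : (d : ℝ) ≤ d ^ 2 := by exact_mod_cast Nat.le_self_pow two_ne_zero d
  have hu2 : d * L ^ 2 * u ^ 2 ≤ d * L ^ 2 * r ^ 2 := by gcongr
  have hv2 : d * L ^ 2 * v ^ 2 ≤ d * L ^ 2 * r ^ 2 := by gcongr
  have hr : d * L ^ 2 * r ^ 2 ≤ d ^ 2 * L ^ 2 * r ^ 2 := by gcongr
  have hx : 0 ≤ d * L ^ 2 * ‖x - z‖ ^ 2 := by positivity
  have hy : 0 ≤ d * L ^ 2 * ‖y - z‖ ^ 2 := by positivity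
  have hr0 : 0 ≤ d ^ 2 * L ^ 2 * r ^ 2 := by positivity
  nlinarith

end Estimators

theorem stmt15_general (d N : ℕ) (L : ℝ) (f : Fin N → EuclideanSpace ℝ (Fin d) → ℝ)
    (hdiff : ∀ i, Differentiable ℝ (f i))
    (hsmooth : ∀ i x y, ‖gradient (f i) x - gradient (f i) y‖ ≤ L * ‖x - y‖)
    (x xt : Fin N → EuclideanSpace ℝ (Fin d)) (ut : ℝ)
    (u' ut' : Fin N → ℝ) (hu' : ∀ i, 0 < u' i) (h1 : ∀ i, u' i ≤ ut' i)
    (h2 : ∀ i, ut' i ≤ ut) :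
    ((d : ℝ) ^ N)⁻¹ * ∑ l : Fin N → Fin d,
        ‖(N : ℝ)⁻¹ • ∑ i, (Gc d (f i) (x i) (u' i) (l i) - Gc d (f i) (xt i) (ut' i) (l i)
            + G2d d (f i) (xt i) (ut' i))‖ ^ 2
      ≤ 2 * ‖gradient (fun y => (N : ℝ)⁻¹ * ∑ i, f i y) ((N : ℝ)⁻¹ • ∑ m, x m)‖ ^ 2
        + (4 * L ^ 2 * (1 + 12 * (d : ℝ)) / N) * ∑ i, ‖x i - (N : ℝ)⁻¹ • ∑ m, x m‖ ^ 2
        + (48 * (d : ℝ) * L ^ 2 / N) * ∑ i, ‖xt i - (N : ℝ)⁻¹ • ∑ m, x m‖ ^ 2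
        + 14 * ut ^ 2 * L ^ 2 * (d : ℝ) ^ 2 := by
  rcases Nat.eq_zero_or_pos N with rfl | hN
  · calc _ = (0 : ℝ) := by simp
      _ ≤ _ := by positivity
  rcases Nat.eq_zero_or_pos d with rfl | hd
  · calc _ = (0 : ℝ) := by simp [Subsingleton.elim _ (0 : EuclideanSpace ℝ (Fin 0))]
      _ ≤ _ := by positivity
  have : NeZero d := ⟨hd.ne'⟩
  have : NeZero N := ⟨hN.ne'⟩
  set xb : EuclideanSpace ℝ (Fin d) := (N : ℝ)⁻¹ • ∑ m, x m
  calc _ ≤ 2 * ‖(N : ℝ)⁻¹ • ∑ i, gradient (f i) xb‖ ^ 2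
        + (N : ℝ)⁻¹ * ∑ i, (2 * ‖G2d d (f i) (x i) (u' i) - gradient (f i) xb‖ ^ 2
          + d * ‖G2d d (f i) (x i) (u' i) - G2d d (f i) (xt i) (ut' i)‖ ^ 2) :=
        inv_pow_mul_sum_norm_inv_smul_sum_Gc_sq_le _ _ _ _ _ _
    _ ≤ 2 * ‖(N : ℝ)⁻¹ • ∑ i, gradient (f i) xb‖ ^ 2
        + (N : ℝ)⁻¹ * ∑ i, (4 * L ^ 2 * (1 + 12 * d) * ‖x i - xb‖ ^ 2
          + 48 * d * L ^ 2 * ‖xt i - xb‖ ^ 2 + 14 * ut ^ 2 * L ^ 2 * d ^ 2) := by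
        refine add_le_add le_rfl (mul_le_mul_of_nonneg_left (sum_le_sum fun i _ => ?_)
          (by positivity))
        exact two_mul_norm_G2d_sub_gradient_sq_add_le (hdiff i) (hsmooth i) _ _ _ (hu' i)
          ((hu' i).trans_le (h1 i)) ((h1 i).trans (h2 i)) (h2 i)
    _ = _ := by
        rw [gradient_const_mul_sum fun i => (hdiff i).differentiableAt]
        simp only [sum_add_distrib, ← mul_sum, sum_const, card_univ, Fintype.card_fin,
          nsmul_eq_mul]
        field_simp
        ring

/-- Averaging over all joint coordinate draws `l ∈ {1,…,d}^N`, the squared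
norm of the averaged variance-reduced estimator is bounded, with `f = (1/N) Σ_i f_i`:
`d^{−N} Σ_l ‖(1/N) Σ_i g_i(l_i)‖² ≤ 2‖∇f(x̄)‖² + (4L²(1+12d)/N) Σ_i ‖x_i−x̄‖²
  + (48dL²/N) Σ_i ‖x̃_i−x̄‖² + 14ũ²L²d²`. -/
theorem stmt15 (d N : ℕ) (L : ℝ) (f : Fin N → EuclideanSpace ℝ (Fin d) → ℝ)
    (hdiff : ∀ i, Differentiable ℝ (f i))
    (hsmooth : ∀ i x y, ‖gradient (f i) x - gradient (f i) y‖ ≤ L * ‖x - y‖)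
    (x xt : Fin N → EuclideanSpace ℝ (Fin d)) (ut : ℝ) (hut : 0 < ut)
    (u' ut' : Fin N → ℝ) (hu' : ∀ i, 0 < u' i) (h1 : ∀ i, u' i ≤ ut' i)
    (h2 : ∀ i, ut' i ≤ ut) :
    ((d : ℝ) ^ N)⁻¹ * ∑ l : Fin N → Fin d,
        ‖(N : ℝ)⁻¹ • ∑ i, (Gc d (f i) (x i) (u' i) (l i) - Gc d (f i) (xt i) (ut' i) (l i)
            + G2d d (f i) (xt i) (ut' i))‖ ^ 2
      ≤ 2 * ‖gradient (fun y => (N : ℝ)⁻¹ * ∑ i, f i y) ((N : ℝ)⁻¹ • ∑ m, x m)‖ ^ 2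
        + (4 * L ^ 2 * (1 + 12 * (d : ℝ)) / N) * ∑ i, ‖x i - (N : ℝ)⁻¹ • ∑ m, x m‖ ^ 2
        + (48 * (d : ℝ) * L ^ 2 / N) * ∑ i, ‖xt i - (N : ℝ)⁻¹ • ∑ m, x m‖ ^ 2
        + 14 * ut ^ 2 * L ^ 2 * (d : ℝ) ^ 2 :=
  stmt15_general d N L f hdiff hsmooth x xt ut u' ut' hu' h1 h2
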